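/- arXiv:1402.5618 — 7 statements merged into one kernel-verified Lean document; each statement's English description precedes it below -/
import Mathlib

section
/- The set G = {(ρ, m, E) ∈ ℝ³ : ρ > 0 and E/ρ - (m/ρ)²/2 > 0} of physically admissible states (positive density and positive specific internal energy) is a convex subset of ℝ³. -/
lemma admissible_iff_poly (r m E : ℝ) (hr : 0 < r) :
    (0 < E / r - (m / r) ^ 2 / 2) ↔ m ^ 2 < 2 * r * E := by
  rw [sub_pos, div_pow, div_div, div_lt_div_iff₀ (by positivity) hr]
  constructor
  · intro h
    nlinarith [mul_pos hr hr]
  · intro h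
    nlinarith [mul_pos hr hr]

/-- The set `G` of physically admissible states `(ρ, m, E)` (positive density and
positive specific internal energy) for the 1D compressible Euler equations is convex. -/
theorem admissible_states_convex :
    Convex ℝ {U : ℝ × ℝ × ℝ | 0 < U.1 ∧ 0 < U.2.2 / U.1 - (U.2.1 / U.1) ^ 2 / 2} := by
  rintro ⟨r1, m1, E1⟩ ⟨hr1, he1⟩ ⟨r2, m2, E2⟩ ⟨hr2, he2⟩ a b ha hb hab
  simp only [Set.mem_setOf_eq] at *
  rw [admissible_iff_poly _ _ _ hr1] at he1
  rw [admissible_iff_poly _ _ _ hr2] at he2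
  have hR : 0 < a * r1 + b * r2 := by
    rcases eq_or_lt_of_le ha with h | h
    · have hb' : b = 1 := by linarith
      simpa [← h, hb'] using hr2
    · nlinarith
  simp only [Prod.smul_mk, Prod.mk_add_mk, smul_eq_mul]
  refine ⟨hR, ?_⟩
  rw [admissible_iff_poly _ _ _ hR]
  have h1 : 0 < 2 * r1 * E1 - m1 ^ 2 := by linarith
  have h2 : 0 < 2 * r2 * E2 - m2 ^ 2 := by linarith
  have hcross : 0 < 2 * r1 * E2 + 2 * r2 * E1 - 2 * m1 * m2 := by
    nlinarith [sq_nonneg (r1 * m2 - r2 * m1), mul_pos (mul_pos hr1 hr1) h2,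
      mul_pos (mul_pos hr2 hr2) h1, mul_pos hr1 hr2]
  rcases eq_or_lt_of_le ha with h | h
  · have hb' : b = 1 := by linarith
    rw [← h, hb']
    nlinarith
  · nlinarith [mul_pos (mul_pos h h) h1, mul_nonneg (mul_nonneg hb hb) h2.le,
      mul_nonneg (mul_nonneg h.le hb) hcross.le]
end

section
/- Let ρ_l > 0, p_l > 0, e_l = p_l/((γ-1)ρ_l) with γ > 1. If S_L < u_l - p_l/(ρ_l √(2 e_l)), then for every real value of S_M - u_l, the quadratic inequality (1/2)ρ_l (S_M - u_l)² - p_l (S_M - u_l)/(u_l - S_L) + p_l/(γ-1) > 0 holds. -/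
/-- Positivity of the HLLC quadratic: if `S_L < u_l - p_l/(ρ_l √(2 e_l))`, then
for every value of `S_M`, the quadratic in `S_M - u_l` is positive. -/
theorem hllc_quadratic_pos (ρl pl γ el ul SL : ℝ)
    (hρ : 0 < ρl) (hp : 0 < pl) (hγ : 1 < γ)
    (he : el = pl / ((γ - 1) * ρl))
    (hSL : SL < ul - pl / (ρl * Real.sqrt (2 * el))) :
    ∀ SM : ℝ,
      0 < (1 / 2) * ρl * (SM - ul) ^ 2 - pl * (SM - ul) / (ul - SL) + pl / (γ - 1) := by
  intro SM
  have hγ1 : 0 < γ - 1 := by linarith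
  have hel : 0 < el := by rw [he]; positivity
  have hs : 0 < Real.sqrt (2 * el) := Real.sqrt_pos.mpr (by linarith)
  have hsq : Real.sqrt (2 * el) ^ 2 = 2 * el := Real.sq_sqrt (by linarith)
  have h1 : pl / (ρl * Real.sqrt (2 * el)) < ul - SL := by linarith
  have hpos : 0 < pl / (ρl * Real.sqrt (2 * el)) := by positivity
  have hd : 0 < ul - SL := lt_trans hpos h1
  have h2 : pl < (ul - SL) * (ρl * Real.sqrt (2 * el)) :=
    (div_lt_iff₀ (by positivity)).mp h1
  set a := pl / (ul - SL) with haa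
  have ha : a < ρl * Real.sqrt (2 * el) :=
    (div_lt_iff₀ hd).mpr (by nlinarith)
  have ha0 : 0 < a := div_pos hp hd
  have hel2 : el * ((γ - 1) * ρl) = pl := by
    rw [he]; field_simp
  have hkey : a ^ 2 * (γ - 1) < 2 * ρl * pl := by
    have h4 : a ^ 2 < ρl ^ 2 * (2 * el) := by nlinarith
    nlinarith
  have hrw : pl * (SM - ul) / (ul - SL) = a * (SM - ul) := by
    rw [haa]; ring
  rw [hrw]
  set P := pl / (γ - 1) with hP
  have hPe : (γ - 1) * P = pl := by rw [hP]; field_simp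
  have hP0 : 0 < P := by rw [hP]; positivity
  have hkey2 : a ^ 2 < 2 * ρl * P := by nlinarith
  nlinarith [sq_nonneg (ρl * (SM - ul) - a)]
end

section
/- Given ρ_l > 0, E_l, u_l, p_l with e_l := E_l/ρ_l - u_l²/2 > 0, S_L < u_l, S_L < S_M, and S_L < u_l - √((γ-1)/(2γ)) a_l where a_l = √(γ p_l/ρ_l) and p_l = (γ-1)ρ_l e_l, the HLLC left intermediate state U*_l = (ρ*_l, ρ*_l u*_l, E*_l) defined by ρ*_l = ρ_l (S_L-u_l)/(S_L-S_M), p* = ρ_l (u_l-S_L)(u_l-S_M)+p_l, ρ*_l u*_l = ((S_L-u_l)ρ_l u_l + (p*-p_l))/(S_L-S_M), E*_l = ((S_L-u_l)E_l - p_l u_l + p* S_M)/(S_L-S_M), satisfies ρ*_l > 0 and E*_l - (ρ*_l u*_l)²/(2ρ*_l) > 0. -/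
set_option maxHeartbeats 1000000 in
/-- Admissibility of the HLLC left intermediate state: under the stated wavespeed
conditions, `ρ*_l > 0` and the intermediate internal energy is positive. -/
theorem hllc_left_star_state_admissible
    (ρl El ul pl el γ al SL SM ρstar pstar mstar Estar : ℝ)
    (hρ : 0 < ρl) (hγ : 1 < γ)
    (hel : el = El / ρl - ul ^ 2 / 2) (hepos : 0 < el)
    (hpl : pl = (γ - 1) * ρl * el)
    (hal : al = Real.sqrt (γ * pl / ρl))
    (h1 : SL < ul) (h2 : SL < SM)
    (h3 : SL < ul - Real.sqrt ((γ - 1) / (2 * γ)) * al)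
    (hρstar : ρstar = ρl * (SL - ul) / (SL - SM))
    (hpstar : pstar = ρl * (ul - SL) * (ul - SM) + pl)
    (hmstar : mstar = ((SL - ul) * ρl * ul + (pstar - pl)) / (SL - SM))
    (hEstar : Estar = ((SL - ul) * El - pl * ul + pstar * SM) / (SL - SM)) :
    0 < ρstar ∧ 0 < Estar - mstar ^ 2 / (2 * ρstar) := by
  have ha : 0 < ul - SL := by linarith
  have hb : 0 < SM - SL := by linarith
  have hden : SL - SM ≠ 0 := by intro h; linarith [sub_eq_zero.mp h]
  have hρne : ρl ≠ 0 := ne_of_gt hρ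
  -- density positivity
  have hρs : 0 < ρstar := by
    rw [hρstar]
    have : ρl * (SL - ul) / (SL - SM) = ρl * (ul - SL) / (SM - SL) := by
      rw [div_eq_div_iff hden (ne_of_gt hb)]; ring
    rw [this]
    positivity
  have hρsne : ρstar ≠ 0 := ne_of_gt hρs
  -- momentum simplification: mstar = ρstar * SM
  have hm : mstar = ρstar * SM := by
    rw [hmstar, hpstar, hρstar]
    field_simp
    ring
  -- El in terms of el
  have hEl : El = ρl * el + ρl * ul ^ 2 / 2 := by
    have : El / ρl = el + ul ^ 2 / 2 := by rw [hel]; ring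
    field_simp at this
    linarith
  -- key wavespeed bound: 2*(ul-SL)^2 > (γ-1)^2 * el
  have hγ0 : (0:ℝ) < γ := by linarith
  have hq : (0:ℝ) ≤ (γ - 1) / (2 * γ) := by
    apply div_nonneg <;> linarith
  have hplρeq : γ * pl / ρl = γ * (γ - 1) * el := by
    rw [hpl]; field_simp
  have hplρ : (0:ℝ) ≤ γ * pl / ρl := by
    rw [hplρeq]
    have := mul_pos (mul_pos hγ0 (by linarith : (0:ℝ) < γ - 1)) hepos
    linarith
  have hs : Real.sqrt ((γ - 1) / (2 * γ)) * al ≥ 0 := by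
    rw [hal]; exact mul_nonneg (Real.sqrt_nonneg _) (Real.sqrt_nonneg _)
  have hkey : (γ - 1) ^ 2 * el < 2 * (ul - SL) ^ 2 := by
    have hlt : Real.sqrt ((γ - 1) / (2 * γ)) * al < ul - SL := by linarith
    have hsq : (Real.sqrt ((γ - 1) / (2 * γ)) * al) ^ 2 < (ul - SL) ^ 2 := by
      apply sq_lt_sq' <;> nlinarith
    have h1' : (Real.sqrt ((γ - 1) / (2 * γ)) * al) ^ 2
        = ((γ - 1) / (2 * γ)) * (γ * pl / ρl) := by
      rw [hal, mul_pow, Real.sq_sqrt hq, Real.sq_sqrt hplρ]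
    have h2' : ((γ - 1) / (2 * γ)) * (γ * pl / ρl) = (γ - 1) ^ 2 * el / 2 := by
      rw [hpl]; field_simp
    rw [h1', h2'] at hsq
    linarith
  -- internal energy expression
  have hm2 : mstar ^ 2 / (2 * ρstar) = ρstar * SM ^ 2 / 2 := by
    rw [hm]; field_simp
  have hexpr : Estar - mstar ^ 2 / (2 * ρstar)
      = ρl * ((ul - SL) * el - (γ - 1) * el * (SM - ul)
          + (ul - SL) * (SM - ul) ^ 2 / 2) / (SM - SL) := by
    rw [hm2, hEstar, hρstar, hpstar, hEl, hpl]
    field_simp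
    ring
  refine ⟨hρs, ?_⟩
  rw [hexpr]
  apply div_pos _ hb
  have hnum : 0 < (ul - SL) * el - (γ - 1) * el * (SM - ul)
      + (ul - SL) * (SM - ul) ^ 2 / 2 := by
    have h2a : (0:ℝ) < 2 * (ul - SL) := by linarith
    have hrhs : (0:ℝ) < ((ul - SL) * (SM - ul) - (γ - 1) * el) ^ 2
        + el * (2 * (ul - SL) ^ 2 - (γ - 1) ^ 2 * el) := by
      have := mul_pos hepos (by linarith : (0:ℝ) < 2 * (ul - SL) ^ 2 - (γ - 1) ^ 2 * el)
      nlinarith [sq_nonneg ((ul - SL) * (SM - ul) - (γ - 1) * el)]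
    have heq : (ul - SL) * el - (γ - 1) * el * (SM - ul)
        + (ul - SL) * (SM - ul) ^ 2 / 2
        = (((ul - SL) * (SM - ul) - (γ - 1) * el) ^ 2
            + el * (2 * (ul - SL) ^ 2 - (γ - 1) ^ 2 * el)) / (2 * (ul - SL)) := by
      rw [eq_div_iff (by positivity : (2:ℝ) * (ul - SL) ≠ 0)]
      ring
    rw [heq]
    exact div_pos hrhs h2a
  exact mul_pos hρ hnum
end

section
/- For a smooth function u that is a polynomial of degree at most 4 on ℝ, with uniform mesh size h, cell averages ū_j = (1/h)∫_{x_{j-1/2}}^{x_{j+1/2}} u dx, the compact relation (3/10)u(x_{j-1/2}) + (6/10)u(x_{j+1/2}) + (1/10)u(x_{j+3/2}) = (1/30)ū_{j-1} + (19/30)ū_j + (10/30)ū_{j+1} holds exactly. -/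
lemma eval_sum_range5 (P : Polynomial ℝ) (hP : P.degree ≤ 4) (t : ℝ) :
    P.eval t = ∑ i ∈ Finset.range 5, P.coeff i * t ^ i := by
  have h5 : P.natDegree < 5 := by
    have := Polynomial.natDegree_le_iff_degree_le.mpr hP
    simp only [show ((4:ℕ):WithBot ℕ) = (4:WithBot ℕ) by norm_cast] at this
    omega
  simpa using Polynomial.eval_eq_sum_range' h5 t

lemma integral_eval (P : Polynomial ℝ) (hP : P.degree ≤ 4) (a b : ℝ) :
    (∫ t in a..b, P.eval t) =
      ∑ i ∈ Finset.range 5, P.coeff i * ((b ^ (i + 1) - a ^ (i + 1)) / (i + 1)) := by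
  have : (∫ t in a..b, P.eval t)
      = ∫ t in a..b, ∑ i ∈ Finset.range 5, P.coeff i * t ^ i := by
    congr 1; ext t; exact eval_sum_range5 P hP t
  rw [this, intervalIntegral.integral_finset_sum]
  · refine Finset.sum_congr rfl fun i _ => ?_
    rw [intervalIntegral.integral_const_mul, integral_pow]
  · intro i _
    exact (continuous_const.mul (continuous_pow i)).intervalIntegrable a b

/-- The fifth-order compact finite volume relation is exact for polynomials of
degree at most 4 on a uniform grid. -/
theorem compact_fifth_order_exact_poly
    (P : Polynomial ℝ) (hP : P.degree ≤ 4) (x h : ℝ) (hh : 0 < h) :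
    (3 / 10) * P.eval x + (6 / 10) * P.eval (x + h) + (1 / 10) * P.eval (x + 2 * h) =
      (1 / 30) * ((1 / h) * ∫ t in (x - h)..x, P.eval t) +
      (19 / 30) * ((1 / h) * ∫ t in x..(x + h), P.eval t) +
      (10 / 30) * ((1 / h) * ∫ t in (x + h)..(x + 2 * h), P.eval t) := by
  rw [eval_sum_range5 P hP, eval_sum_range5 P hP, eval_sum_range5 P hP,
    integral_eval P hP, integral_eval P hP, integral_eval P hP]
  simp only [Finset.sum_range_succ, Finset.sum_range_zero]
  have hh' : h ≠ 0 := ne_of_gt hh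
  push_cast
  field_simp
  ring
end

section
/- If the smoothness indicators satisfy β_k = D(1 + O(h²)) for a common positive constant D (i.e., |β_k - D| ≤ C h² D for all k, with C h² ≤ 1/2), then the WENO-Z weights satisfy |ω_k - c_k| ≤ C' h⁴ for some constant C' depending only on C, D, ε and the c_k. -/
private lemma weno_one_bound (c s t M : ℝ) (hc0 : 0 < c) (hc1 : c ≤ 1)
    (hs0 : 0 ≤ s) (hsM : s ≤ M) (ht0 : 0 ≤ t) (htM : t ≤ M) :
    |c * (1 + s) / (1 + t) - c| ≤ M := by
  have h1t : (0:ℝ) < 1 + t := by linarith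
  have heq : c * (1 + s) / (1 + t) - c = c * (s - t) / (1 + t) := by
    field_simp; ring
  rw [heq, abs_div, abs_of_pos h1t, abs_mul, abs_of_pos hc0, div_le_iff₀ h1t]
  have habs : |s - t| ≤ M := abs_le.mpr ⟨by linarith, by linarith⟩
  have hM0 : 0 ≤ M := le_trans hs0 hsM
  nlinarith [abs_nonneg (s - t)]

/-- If all smoothness indicators agree with a common positive constant `D` up to a
relative error `C h²` (with `C h² ≤ 1/2`), then the WENO-Z weights deviate from
the linear weights by at most `C' h⁴`, with `C'` depending only on `C, D, ε, c_k`. -/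
theorem wenoZ_weights_accuracy
    (C D ε c0 c1 c2 : ℝ)
    (hC : 0 < C) (hD : 0 < D) (hε : 0 < ε)
    (hc0 : 0 < c0) (hc1 : 0 < c1) (hc2 : 0 < c2) (hcsum : c0 + c1 + c2 = 1) :
    ∃ C' : ℝ, ∀ h β0 β1 β2 : ℝ, 0 ≤ h → C * h ^ 2 ≤ 1 / 2 →
      |β0 - D| ≤ C * h ^ 2 * D → |β1 - D| ≤ C * h ^ 2 * D → |β2 - D| ≤ C * h ^ 2 * D →
      let τ := |β2 - β0|
      let α0 := c0 * (1 + (τ / (β0 + ε)) ^ 2)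
      let α1 := c1 * (1 + (τ / (β1 + ε)) ^ 2)
      let α2 := c2 * (1 + (τ / (β2 + ε)) ^ 2)
      |α0 / (α0 + α1 + α2) - c0| ≤ C' * h ^ 4 ∧
      |α1 / (α0 + α1 + α2) - c1| ≤ C' * h ^ 4 ∧
      |α2 / (α0 + α1 + α2) - c2| ≤ C' * h ^ 4 := by
  refine ⟨(2 * C * D / ε) ^ 2, ?_⟩
  intro h β0 β1 β2 hh hCh hb0 hb1 hb2 τ α0 α1 α2
  have hτdef : τ = |β2 - β0| := rfl
  have hα0 : α0 = c0 * (1 + (τ / (β0 + ε)) ^ 2) := rfl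
  have hα1 : α1 = c1 * (1 + (τ / (β1 + ε)) ^ 2) := rfl
  have hα2 : α2 = c2 * (1 + (τ / (β2 + ε)) ^ 2) := rfl
  clear_value τ α0 α1 α2
  set M : ℝ := (2 * C * D / ε) ^ 2 * h ^ 4 with hM
  -- lower bounds on the betas
  have hb0' := abs_le.mp hb0
  have hb1' := abs_le.mp hb1
  have hb2' := abs_le.mp hb2
  have hChD : C * h ^ 2 * D ≤ D / 2 := by
    have := mul_le_mul_of_nonneg_right hCh hD.le
    linarith
  have hβ0 : 0 < β0 + ε := by linarith [hb0'.1]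
  have hβ1 : 0 < β1 + ε := by linarith [hb1'.1]
  have hβ2 : 0 < β2 + ε := by linarith [hb2'.1]
  have hεβ0 : ε ≤ β0 + ε := by linarith [hb0'.1]
  have hεβ1 : ε ≤ β1 + ε := by linarith [hb1'.1]
  have hεβ2 : ε ≤ β2 + ε := by linarith [hb2'.1]
  -- bound on τ
  have hτ0 : 0 ≤ τ := hτdef ▸ abs_nonneg _
  have hτle : τ ≤ 2 * C * h ^ 2 * D := by
    rw [hτdef]
    calc |β2 - β0| ≤ |β2 - D| + |D - β0| := abs_sub_le _ _ _
      _ = |β2 - D| + |β0 - D| := by rw [abs_sub_comm D β0]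
      _ ≤ 2 * C * h ^ 2 * D := by linarith
  -- bounds on s_k
  have key : ∀ b : ℝ, 0 < b + ε → ε ≤ b + ε → (τ / (b + ε)) ^ 2 ≤ M := by
    intro b hb hεb
    have hq : 0 ≤ τ / (b + ε) := div_nonneg hτ0 hb.le
    have h3 : τ / (b + ε) ≤ 2 * C * h ^ 2 * D / ε :=
      div_le_div₀ (by positivity) hτle hε hεb
    have h4 : (τ / (b + ε)) ^ 2 ≤ (2 * C * h ^ 2 * D / ε) ^ 2 :=
      pow_le_pow_left₀ hq h3 2
    have h5 : (2 * C * h ^ 2 * D / ε) ^ 2 = M := by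
      rw [hM]; field_simp
    linarith
  have hs0M : (τ / (β0 + ε)) ^ 2 ≤ M := key β0 hβ0 hεβ0
  have hs1M : (τ / (β1 + ε)) ^ 2 ≤ M := key β1 hβ1 hεβ1
  have hs2M : (τ / (β2 + ε)) ^ 2 ≤ M := key β2 hβ2 hεβ2
  have hs00 : 0 ≤ (τ / (β0 + ε)) ^ 2 := sq_nonneg _
  have hs10 : 0 ≤ (τ / (β1 + ε)) ^ 2 := sq_nonneg _
  have hs20 : 0 ≤ (τ / (β2 + ε)) ^ 2 := sq_nonneg _
  set t : ℝ := c0 * (τ / (β0 + ε)) ^ 2 + c1 * (τ / (β1 + ε)) ^ 2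
      + c2 * (τ / (β2 + ε)) ^ 2 with ht
  have hsum : α0 + α1 + α2 = 1 + t := by
    rw [hα0, hα1, hα2, ht]; linear_combination hcsum
  have ht0 : 0 ≤ t := by positivity
  have hM0 : 0 ≤ M := le_trans hs00 hs0M
  have hcM : c0 * M + c1 * M + c2 * M = M := by linear_combination M * hcsum
  have htM : t ≤ M := by
    have h0 := mul_le_mul_of_nonneg_left hs0M hc0.le
    have h1 := mul_le_mul_of_nonneg_left hs1M hc1.le
    have h2 := mul_le_mul_of_nonneg_left hs2M hc2.le
    rw [ht]; linarith
  have hc0le : c0 ≤ 1 := by linarith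
  have hc1le : c1 ≤ 1 := by linarith
  have hc2le : c2 ≤ 1 := by linarith
  refine ⟨?_, ?_, ?_⟩
  · rw [hsum, hα0]
    exact weno_one_bound c0 _ t M hc0 hc0le hs00 hs0M ht0 htM
  · rw [hsum, hα1]
    exact weno_one_bound c1 _ t M hc1 hc1le hs10 hs1M ht0 htM
  · rw [hsum, hα2]
    exact weno_one_bound c2 _ t M hc2 hc2le hs20 hs2M ht0 htM
end

section
/- The positivity-preserving density limiter ρ̂(x) = θ(ρ(x) - ρ̄) + ρ̄ with θ = min{(ρ̄ - ε)/(ρ̄ - ρ_min), 1}, where ρ_min = min over a finite point set S of ρ(x), 0 < ε ≤ ρ̄, and ρ̄ is the average, satisfies ρ̂(x) ≥ ε for all x ∈ S, and the cell average of ρ̂ equals ρ̄ whenever the average of ρ equals ρ̄. -/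
/-!
Below `ε` the limiter rescales `ρ - ρ̄` by the factor `θ` that sends the smallest value `ρ_min`
exactly to `ε`; since `θ ≥ 0`, every larger value stays above `ε`. The map `y ↦ θ (y - ρ̄) + ρ̄`
is affine and fixes `ρ̄`, so it preserves any average equal to `ρ̄`.
-/

/-- The scaling factor `θ = min {(ρ̄ - ε) / (ρ̄ - m), 1}` of the limiter, for minimum value `m`. -/
noncomputable def limiterScale (ρbar ε m : ℝ) : ℝ :=
  if ε ≤ m then 1 else (ρbar - ε) / (ρbar - m)

lemma le_limiterScale_mul_sub_add {ρbar ε m y : ℝ} (hε : ε ≤ ρbar) (hm : m ≤ y) :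
    ε ≤ limiterScale ρbar ε m * (y - ρbar) + ρbar := by
  unfold limiterScale
  split_ifs with h
  · linarith
  · have hgap : 0 < ρbar - m := by linarith
    calc ε = (ρbar - ε) / (ρbar - m) * (m - ρbar) + ρbar := by field_simp; ring
      _ ≤ (ρbar - ε) / (ρbar - m) * (y - ρbar) + ρbar := by gcongr

lemma intervalAverage_mul_sub_add_eq {f : ℝ → ℝ} {a b : ℝ}
    (hf : IntervalIntegrable f MeasureTheory.volume a b) (θ c : ℝ)
    (havg : (1 / (b - a)) * ∫ t in a..b, f t = c) :
    (1 / (b - a)) * ∫ t in a..b, (θ * (f t - c) + c) = c := by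
  -- For `a = b` both averages are `1 / 0 * 0 = 0`, so `havg` says `c = 0`.
  rcases eq_or_ne a b with rfl | hab
  · simpa using havg
  have hint : ∫ t in a..b, (θ * (f t - c) + c) =
      θ * ((∫ t in a..b, f t) - (b - a) * c) + (b - a) * c := by
    rw [intervalIntegral.integral_add ((hf.sub intervalIntegrable_const).const_mul θ)
      intervalIntegrable_const, intervalIntegral.integral_const_mul,
      intervalIntegral.integral_sub hf intervalIntegrable_const, intervalIntegral.integral_const,
      smul_eq_mul]
  have hba : b - a ≠ 0 := sub_ne_zero.mpr hab.symm
  have hf_int : ∫ t in a..b, f t = (b - a) * c := by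
    rw [← havg]; field_simp
  rw [hint, hf_int]
  field_simp
  ring

theorem density_limiter_properties_general
    (P : Polynomial ℝ) (a b : ℝ)
    (S : Finset ℝ) (hS : S.Nonempty)
    (ρbar ε : ℝ) (hεle : ε ≤ ρbar) :
    let ρmin := S.inf' hS (fun x => P.eval x)
    let θ : ℝ := if ε ≤ ρmin then 1 else (ρbar - ε) / (ρbar - ρmin)
    (∀ x ∈ S, ε ≤ θ * (P.eval x - ρbar) + ρbar) ∧
    ((1 / (b - a)) * ∫ t in a..b, P.eval t = ρbar →
      (1 / (b - a)) * ∫ t in a..b, (θ * (P.eval t - ρbar) + ρbar) = ρbar) :=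
  ⟨fun _ hx => le_limiterScale_mul_sub_add hεle (S.inf'_le _ hx),
    intervalAverage_mul_sub_add_eq (P.continuous.intervalIntegrable a b) _ ρbar⟩

/-- The positivity-preserving density limiter keeps the values at the quadrature
points at least `ε` and preserves the cell average. -/
theorem density_limiter_properties
    (P : Polynomial ℝ) (a b : ℝ) (hab : a < b)
    (S : Finset ℝ) (hS : S.Nonempty)
    (ρbar ε : ℝ) (hε : 0 < ε) (hεle : ε ≤ ρbar) :
    let ρmin := S.inf' hS (fun x => P.eval x)
    let θ : ℝ := if ε ≤ ρmin then 1 else (ρbar - ε) / (ρbar - ρmin)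
    (∀ x ∈ S, ε ≤ θ * (P.eval x - ρbar) + ρbar) ∧
    ((1 / (b - a)) * ∫ t in a..b, P.eval t = ρbar →
      (1 / (b - a)) * ∫ t in a..b, (θ * (P.eval t - ρbar) + ρbar) = ρbar) :=
  density_limiter_properties_general P a b S hS ρbar ε hεle
end

section
/- If |ρ(x) - ρ̄| ≤ C h⁵ on the cell, ρ̄ ≥ ε + δ for fixed δ > 0 and h small, then the limited function ρ̂(x) = θ(ρ(x)-ρ̄)+ρ̄ satisfies |ρ̂(x) - ρ(x)| ≤ C'' h⁵ for all x in the cell, i.e., the positivity limiter does not destroy fifth-order accuracy for smooth solutions bounded away from vacuum. -/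
/-- The positivity limiter does not destroy fifth-order accuracy for smooth
solutions bounded away from vacuum. -/
theorem density_limiter_accuracy
    (C δ ε : ℝ) (hC : 0 < C) (hδ : 0 < δ) (hε : 0 < ε) :
    ∃ C'' : ℝ, ∀ (h a b : ℝ) (ρ : ℝ → ℝ) (S : Finset ℝ) (hS : S.Nonempty) (ρbar : ℝ),
      0 < h → a < b → (↑S : Set ℝ) ⊆ Set.Icc a b →
      (∀ x ∈ Set.Icc a b, |ρ x - ρbar| ≤ C * h ^ 5) →
      ε + δ ≤ ρbar → C * h ^ 5 ≤ δ →
      let ρmin := S.inf' hS ρ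
      let θ : ℝ := if ε ≤ ρmin then 1 else (ρbar - ε) / (ρbar - ρmin)
      ∀ x ∈ Set.Icc a b, |(θ * (ρ x - ρbar) + ρbar) - ρ x| ≤ C'' * h ^ 5 := by
  refine ⟨C, ?_⟩
  intro h a b ρ S hS ρbar hh hab hsub hbound hρbar hhδ ρmin θ x hx
  have hθ : 0 ≤ θ ∧ θ ≤ 1 := by
    unfold θ
    split
    · norm_num
    · rename_i hne
      have h1 : ρmin < ε := lt_of_not_ge hne
      have h2 : ε < ρbar := by linarith
      constructor
      · exact div_nonneg (by linarith) (by linarith)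
      · rw [div_le_one (by linarith)]
        linarith
  have heq : θ * (ρ x - ρbar) + ρbar - ρ x = (θ - 1) * (ρ x - ρbar) := by ring
  rw [heq, abs_mul]
  have h1 : |θ - 1| ≤ 1 := abs_le.mpr ⟨by linarith [hθ.1], by linarith [hθ.2]⟩
  calc |θ - 1| * |ρ x - ρbar| ≤ 1 * (C * h ^ 5) :=
        mul_le_mul h1 (hbound x hx) (abs_nonneg _) one_pos.le
    _ = C * h ^ 5 := one_mul _
end
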